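/- Let G be a finite DAG with topological ordering π and u, v vertices. Suppose ℓ₁, ℓ₂ are the two topologically latest LCAs of u and v, and W is a set of vertices each occurring strictly later in π than every LCA of u and v other than ℓ₁ and ℓ₂. Then Anc(u) ∩ Anc(v) ∩ W = (Anc(ℓ₁) ∪ Anc(ℓ₂)) ∩ W. -/
import Mathlib


variable {V : Type*}

/-- Reflexive-transitive reachability along directed edges. -/
def Reach (E : V → V → Prop) : V → V → Prop := Relation.ReflTransGen E

/-- Set of (reflexive) ancestors of `u`. -/
def Anc (E : V → V → Prop) (u : V) : Set V := {x | Reach E x u}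

/-- `w` is a lowest common ancestor of `u` and `v`. -/
def IsLCA (E : V → V → Prop) (u v w : V) : Prop :=
  Reach E w u ∧ Reach E w v ∧
    ∀ y, y ≠ w → Reach E w y → ¬(Reach E y u ∧ Reach E y v)

/-- The set of LCAs of `u` and `v`. -/
def LCAset (E : V → V → Prop) (u v : V) : Set V := {w | IsLCA E u v w}

/-- The directed graph given by `E` is acyclic (reachability is antisymmetric). -/
def IsDAG (E : V → V → Prop) : Prop :=
  ∀ u v : V, Reach E u v → Reach E v u → u = v

lemma reach_le {E : V → V → Prop} {π : V → ℕ} (hedge : ∀ u v : V, E u v → π u < π v)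
    {a b : V} (h : Reach E a b) : π a ≤ π b := by
  induction h with
  | refl => exact le_refl _
  | tail _ h ih => exact ih.trans (hedge _ _ h).le

lemma reach_lca [Fintype V] (E : V → V → Prop) (π : V → ℕ)
    (hinj : Function.Injective π) (hedge : ∀ u v : V, E u v → π u < π v) (u v x : V)
    (hxu : Reach E x u) (hxv : Reach E x v) :
    ∃ w ∈ LCAset E u v, Reach E x w := by
  classical
  let S : Finset V := Finset.univ.filter (fun y => Reach E x y ∧ Reach E y u ∧ Reach E y v)
  have hxS : x ∈ S := by
    simp only [S, Finset.mem_filter, Finset.mem_univ, true_and]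
    exact ⟨Relation.ReflTransGen.refl, hxu, hxv⟩
  obtain ⟨w, hwS, hwmax⟩ := S.exists_max_image π ⟨x, hxS⟩
  simp only [S, Finset.mem_filter, Finset.mem_univ, true_and] at hwS hwmax
  refine ⟨w, ⟨hwS.2.1, hwS.2.2, ?_⟩, hwS.1⟩
  rintro y hy hwy ⟨hyu, hyv⟩
  have hle := hwmax y ⟨hwS.1.trans hwy, hyu, hyv⟩
  exact hy (hinj (le_antisymm hle (reach_le hedge hwy)))

theorem stmt_12 [Fintype V] (E : V → V → Prop) (π : V → ℕ)
    (hinj : Function.Injective π) (hedge : ∀ u v : V, E u v → π u < π v)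
    (u v ℓ₁ ℓ₂ : V) (hne : ℓ₁ ≠ ℓ₂)
    (hℓ₁ : ℓ₁ ∈ LCAset E u v) (hℓ₂ : ℓ₂ ∈ LCAset E u v)
    (hmax₁ : ∀ w ∈ LCAset E u v, π w ≤ π ℓ₁)
    (hmax₂ : ∀ w ∈ LCAset E u v, w ≠ ℓ₁ → π w ≤ π ℓ₂)
    (W : Set V)
    (hW : ∀ w ∈ LCAset E u v, w ≠ ℓ₁ → w ≠ ℓ₂ → ∀ x ∈ W, π w < π x) :
    Anc E u ∩ Anc E v ∩ W = (Anc E ℓ₁ ∪ Anc E ℓ₂) ∩ W := by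
  ext x
  simp only [Set.mem_inter_iff, Set.mem_union, Anc, Set.mem_setOf_eq]
  constructor
  · rintro ⟨⟨hxu, hxv⟩, hxW⟩
    obtain ⟨w, hw, hxw⟩ := reach_lca E π hinj hedge u v x hxu hxv
    refine ⟨?_, hxW⟩
    by_cases h1 : w = ℓ₁
    · exact Or.inl (h1 ▸ hxw)
    by_cases h2 : w = ℓ₂
    · exact Or.inr (h2 ▸ hxw)
    · exact absurd (reach_le hedge hxw) (not_le.mpr (hW w hw h1 h2 x hxW))
  · rintro ⟨h | h, hxW⟩
    · exact ⟨⟨h.trans hℓ₁.1, h.trans hℓ₁.2.1⟩, hxW⟩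
    · exact ⟨⟨h.trans hℓ₂.1, h.trans hℓ₂.2.1⟩, hxW⟩
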